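/- Let the CII estimate be Î_K = Σ_{ℓ=0}^{n−k} C(n−k,ℓ)·λ_{k,ℓ}·Σ_{W⊆K} (−1)^{k−|W|}·Î_{K,ℓ}^W, where for every W ⊆ K and ℓ ∈ L^{|W|} the stratum estimate Î_{K,ℓ}^W follows the stratum sampling model with count M_{W,ℓ} = 1 + Y_{W,ℓ}, Y_{W,ℓ} binomially distributed with parameters B̃ ≥ 1 and p_{W,ℓ} ≥ 1/γ_k, the sample sequences of distinct estimated strata being mutually independent and independent of the vector of all counts, and Î_{K,ℓ}^W = I_{K,ℓ}^W for ℓ ∉ L^{|W|}. Then Var[Î_K] ≤ (γ_k/B̃)·Σ_{W⊆K} Σ_{ℓ∈L^{|W|}} C(n−k,ℓ)²·λ_{k,ℓ}²·σ²_{K,ℓ,W}. -/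

import Mathlib

open MeasureTheory ProbabilityTheory Finset
open scoped ENNReal

/-- Finsets carry the discrete σ-algebra. -/
instance finsetMeasurableSpace (n : ℕ) : MeasurableSpace (Finset (Fin n)) := ⊤

/-- The stratum `{S ⊆ N∖K : |S| = ℓ}`. -/
def strata (n : ℕ) (K : Finset (Fin n)) (ℓ : ℕ) : Finset (Finset (Fin n)) :=
  Kᶜ.powerset.filter (fun S => S.card = ℓ)

/-- The stratum value `I_{K,ℓ}^W = (1/C(n−k,ℓ))·Σ_{S ⊆ N∖K, |S|=ℓ} ν(S ∪ W)`. -/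
noncomputable def stratVal (n : ℕ) (ν : Finset (Fin n) → ℝ)
    (K W : Finset (Fin n)) (ℓ : ℕ) : ℝ :=
  (((n - K.card).choose ℓ : ℝ))⁻¹ * ∑ S ∈ strata n K ℓ, ν (S ∪ W)

/-- The stratum variance `σ²_{K,ℓ,W}`: the variance of `ν(S ∪ W)` for `S` uniformly
distributed on `{S ⊆ N∖K : |S| = ℓ}`. -/
noncomputable def stratVar (n : ℕ) (ν : Finset (Fin n) → ℝ)
    (K W : Finset (Fin n)) (ℓ : ℕ) : ℝ :=
  (((n - K.card).choose ℓ : ℝ))⁻¹ *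
    ∑ S ∈ strata n K ℓ, (ν (S ∪ W) - stratVal n ν K W ℓ) ^ 2

/-- The cardinal interaction index `I_K`. -/
noncomputable def CII (n : ℕ) (ν : Finset (Fin n) → ℝ) (lam : ℕ → ℝ)
    (K : Finset (Fin n)) : ℝ :=
  ∑ S ∈ Kᶜ.powerset, lam S.card *
    ∑ W ∈ K.powerset, (-1 : ℝ) ^ (K.card - W.card) * ν (S ∪ W)

/-- The constants `γ_2 = 2(n−1)²` and `γ_k = n^{k−1}·(n−k+1)²` for `k ≥ 3`. -/
noncomputable def gam (n k : ℕ) : ℝ :=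
  if k = 2 then 2 * ((n : ℝ) - 1) ^ 2
  else (n : ℝ) ^ (k - 1) * ((n : ℝ) - k + 1) ^ 2

/-- The stratum estimate: sample mean for estimated strata, exact value otherwise. -/
noncomputable def IhatStrat {Ω : Type*} (n : ℕ) (ν : Finset (Fin n) → ℝ)
    (K : Finset (Fin n)) (L : ℕ → Finset ℕ)
    (S : Finset (Fin n) → ℕ → ℕ → Ω → Finset (Fin n))
    (M : Finset (Fin n) → ℕ → Ω → ℕ) (W : Finset (Fin n)) (ℓ : ℕ) (ω : Ω) : ℝ :=
  if ℓ ∈ L W.card then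
    ((M W ℓ ω : ℝ))⁻¹ * ∑ m ∈ Finset.range (M W ℓ ω), ν (S W ℓ m ω ∪ W)
  else stratVal n ν K W ℓ

/-- The CII estimate `Î_K`. -/
noncomputable def IhatCII {Ω : Type*} (n : ℕ) (ν : Finset (Fin n) → ℝ)
    (K : Finset (Fin n)) (lam : ℕ → ℝ) (L : ℕ → Finset ℕ)
    (S : Finset (Fin n) → ℕ → ℕ → Ω → Finset (Fin n))
    (M : Finset (Fin n) → ℕ → Ω → ℕ) (ω : Ω) : ℝ :=
  ∑ ℓ ∈ Finset.range (n - K.card + 1), ((n - K.card).choose ℓ : ℝ) * lam ℓ *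
    ∑ W ∈ K.powerset, (-1 : ℝ) ^ (K.card - W.card) * IhatStrat n ν K L S M W ℓ ω

/-- The index set of estimated strata: pairs `(W, ℓ)` with `W ⊆ K` and `ℓ ∈ L^{|W|}`. -/
def EstIdx (n : ℕ) (K : Finset (Fin n)) (L : ℕ → Finset ℕ) : Type :=
  {p : Finset (Fin n) × ℕ // p.1 ⊆ K ∧ p.2 ∈ L p.1.card}

/-!
The estimate is a constant plus `∑ c_{W,ℓ} X_{W,ℓ}` over the estimated strata, where `X_{W,ℓ}` is
the mean of `M_{W,ℓ}` i.i.d. uniform draws from the stratum and `c_{W,ℓ} = ±C(n−k,ℓ)·λ_{k,ℓ}`.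
As the counts are independent of the draws, they can be frozen: for a fixed count `j ≥ 1` the
sample mean has mean `I_{K,ℓ}^W` and variance `σ²_{K,ℓ,W}/j`, so
`Var X_{W,ℓ} = σ²_{K,ℓ,W}·E[1/M_{W,ℓ}]`, and the sample means of two distinct strata are uncorrelated even though their counts may be
dependent. Hence `Var Î_K = ∑ c_{W,ℓ}²·σ²_{K,ℓ,W}·E[1/M_{W,ℓ}]`, and for `M = 1 + Bin(B̃, p)`
one has `E[1/M] ≤ 1/((B̃+1)p) ≤ γ_k/B̃` because `p ≥ 1/γ_k`.
-/

theorem ProbabilityTheory.IndepFun.integral_comp_eq_integral_integral {Ω β γ : Type*}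
    [MeasurableSpace Ω] {μ : Measure Ω} [IsFiniteMeasure μ] [MeasurableSpace β]
    [MeasurableSpace γ] {X : Ω → β} {Y : Ω → γ} (hXY : IndepFun X Y μ)
    (hX : Measurable X) (hY : Measurable Y) {F : β → γ → ℝ}
    (hF : Measurable (Function.uncurry F)) {C : ℝ} (hC : ∀ b c, |F b c| ≤ C) :
    ∫ ω, F (X ω) (Y ω) ∂μ = ∫ ω, ∫ ω', F (X ω) (Y ω') ∂μ ∂μ := by
  have hprod := (indepFun_iff_map_prod_eq_prod_map_map hX.aemeasurable hY.aemeasurable).1 hXY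
  have hint : Integrable (Function.uncurry F) ((μ.map X).prod (μ.map Y)) :=
    Integrable.of_bound hF.aestronglyMeasurable C (ae_of_all _ fun z => hC z.1 z.2)
  calc ∫ ω, F (X ω) (Y ω) ∂μ = ∫ z, Function.uncurry F z ∂(μ.map fun ω => (X ω, Y ω)) :=
        (integral_map (hX.prodMk hY).aemeasurable hF.aestronglyMeasurable).symm
    _ = ∫ b, ∫ c, F b c ∂(μ.map Y) ∂(μ.map X) := by rw [hprod, integral_prod _ hint]; rfl
    _ = ∫ ω, ∫ ω', F (X ω) (Y ω') ∂μ ∂μ := by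
        rw [integral_map (f := fun b => ∫ c, F b c ∂(μ.map Y)) hX.aemeasurable
          (hF.stronglyMeasurable.integral_prod_right' (ν := μ.map Y)).aestronglyMeasurable]
        congr with ω
        exact integral_map hY.aemeasurable (hF.comp measurable_prodMk_left).aestronglyMeasurable

theorem integral_comp_eq_sum_of_ae_mem {Ω β : Type*} [MeasurableSpace Ω] {μ : Measure Ω}
    [IsFiniteMeasure μ] [MeasurableSpace β] [Countable β] [MeasurableSingletonClass β]
    {X : Ω → β} (hX : Measurable X) {s : Finset β} (hs : ∀ᵐ ω ∂μ, X ω ∈ s) (h : β → ℝ) :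
    ∫ ω, h (X ω) ∂μ = ∑ b ∈ s, μ.real {ω | X ω = b} * h b := by
  have hsupp : (μ.map X).restrict s = μ.map X :=
    Measure.restrict_eq_self_of_ae_mem ((ae_map_iff hX.aemeasurable s.measurableSet).2 hs)
  have hint : IntegrableOn h s (μ.map X) :=
    Integrable.of_bound Measurable.of_discrete.aestronglyMeasurable (∑ b ∈ s, |h b|)
      (ae_restrict_of_forall_mem s.measurableSet fun b hb =>
        single_le_sum (fun b _ => abs_nonneg (h b)) hb)
  rw [← integral_map hX.aemeasurable Measurable.of_discrete.aestronglyMeasurable, ← hsupp,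
    setIntegral_finset _ hint]
  refine sum_congr rfl fun b _ => ?_
  rw [map_measureReal_apply hX (measurableSet_singleton b), smul_eq_mul]
  rfl

theorem variance_fun_sum_of_covariance_eq_zero {Ω ι : Type*} [MeasurableSpace Ω]
    {μ : Measure Ω} [IsFiniteMeasure μ] {X : ι → Ω → ℝ} {s : Finset ι}
    (hX : ∀ i ∈ s, MemLp (X i) 2 μ) (hcov : ∀ i ∈ s, ∀ j ∈ s, i ≠ j → cov[X i, X j; μ] = 0) :
    Var[fun ω => ∑ i ∈ s, X i ω; μ] = ∑ i ∈ s, Var[X i; μ] := by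
  rw [variance_fun_sum' hX]
  refine sum_congr rfl fun i hi => ?_
  rw [sum_eq_single_of_mem i hi fun j hj hji => hcov i hi j hj hji.symm,
    covariance_self (hX i hi).aemeasurable]

theorem variance_const_add_sum_le {Ω ι : Type*} [MeasurableSpace Ω] {μ : Measure Ω}
    [IsProbabilityMeasure μ] {X : ι → Ω → ℝ} {s : Finset ι} {b : ι → ℝ} (c₀ : ℝ) (c : ι → ℝ)
    (hX : ∀ i ∈ s, MemLp (X i) 2 μ) (hcov : ∀ i ∈ s, ∀ j ∈ s, i ≠ j → cov[X i, X j; μ] = 0)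
    (hvar : ∀ i ∈ s, Var[X i; μ] ≤ b i) :
    Var[fun ω => c₀ + ∑ i ∈ s, c i * X i ω; μ] ≤ ∑ i ∈ s, c i ^ 2 * b i := by
  have hcX : ∀ i ∈ s, MemLp (fun ω => c i * X i ω) 2 μ := fun i hi => (hX i hi).const_mul _
  rw [variance_const_add (memLp_finsetSum s hcX).aestronglyMeasurable,
    variance_fun_sum_of_covariance_eq_zero hcX fun i hi j hj hij => by
      rw [covariance_const_mul_left, covariance_const_mul_right, hcov i hi j hj hij, mul_zero,
        mul_zero]]
  exact sum_le_sum fun i hi => by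
    rw [variance_const_mul]
    exact mul_le_mul_of_nonneg_left (hvar i hi) (sq_nonneg _)

section SampleMean

variable {α : Type*}

noncomputable def sampleMean (f : α → ℝ) (j : ℕ) (s : ℕ → α) : ℝ :=
  (j : ℝ)⁻¹ * ∑ m ∈ range j, f (s m)

lemma abs_sampleMean_le {f : α → ℝ} {C : ℝ} (hf : ∀ a, |f a| ≤ C) (j : ℕ) (s : ℕ → α) :
    |sampleMean f j s| ≤ C := by
  rcases Nat.eq_zero_or_pos j with rfl | hj
  · simpa [sampleMean] using (abs_nonneg _).trans (hf (s 0))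
  · rw [sampleMean, abs_mul, abs_inv, Nat.abs_cast, inv_mul_le_iff₀ (by positivity)]
    calc |∑ m ∈ range j, f (s m)| ≤ ∑ m ∈ range j, |f (s m)| := abs_sum_le_sum_abs _ _
      _ ≤ ∑ _m ∈ range j, C := sum_le_sum fun m _ => hf (s m)
      _ = j * C := by simp

lemma abs_sampleMean_sq_le {f : α → ℝ} {C : ℝ} (hf : ∀ a, |f a| ≤ C) (j : ℕ) (s : ℕ → α) :
    |sampleMean f j s ^ 2| ≤ C ^ 2 := by
  rw [abs_pow]
  exact pow_le_pow_left₀ (abs_nonneg _) (abs_sampleMean_le hf j s) 2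

variable [MeasurableSpace α] {f : α → ℝ}

lemma measurable_sampleMean (hf : Measurable f) (j : ℕ) : Measurable (sampleMean f j) :=
  (Finset.measurable_sum _ fun m _ => hf.comp (measurable_pi_apply m)).const_mul _

lemma measurable_uncurry_sampleMean (hf : Measurable f) :
    Measurable (Function.uncurry (sampleMean f)) :=
  measurable_from_prod_countable_right (measurable_sampleMean hf)

variable {Ω : Type*} [MeasurableSpace Ω] {μ : Measure Ω} [IsProbabilityMeasure μ]
  {Z : ℕ → Ω → α} {C a v : ℝ}

theorem integral_sampleMean (hf : Measurable f) (hC : ∀ a, |f a| ≤ C)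
    (hZ : ∀ m, Measurable (Z m)) (hmean : ∀ m, ∫ ω, f (Z m ω) ∂μ = a) {j : ℕ} (hj : j ≠ 0) :
    ∫ ω, sampleMean f j (fun m => Z m ω) ∂μ = a := by
  have hint : ∀ m, Integrable (fun ω => f (Z m ω)) μ := fun m =>
    Integrable.of_bound (hf.comp (hZ m)).aestronglyMeasurable C (ae_of_all _ fun _ => hC _)
  simp only [sampleMean]
  rw [integral_const_mul, integral_finsetSum _ fun m _ => hint m]
  simp only [hmean, sum_const, card_range, nsmul_eq_mul]
  field_simp

theorem variance_sampleMean (hf : Measurable f) (hC : ∀ a, |f a| ≤ C)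
    (hZ : ∀ m, Measurable (Z m)) (hiid : iIndepFun Z μ)
    (hvar : ∀ m, Var[fun ω => f (Z m ω); μ] = v) (j : ℕ) :
    Var[fun ω => sampleMean f j (fun m => Z m ω); μ] = v / j := by
  have hLp : ∀ m ∈ range j, MemLp (fun ω => f (Z m ω)) 2 μ := fun m _ =>
    MemLp.of_bound (hf.comp (hZ m)).aestronglyMeasurable C (ae_of_all _ fun _ => hC _)
  have hsum : (fun ω => ∑ m ∈ range j, f (Z m ω)) = ∑ m ∈ range j, fun ω => f (Z m ω) := by
    ext ω; simp
  simp only [sampleMean]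
  rw [variance_const_mul, hsum, IndepFun.variance_sum hLp
    fun m _ m' _ hmm' => (hiid.indepFun hmm').comp hf hf]
  simp only [hvar, sum_const, card_range, nsmul_eq_mul]
  rcases eq_or_ne (j : ℝ) 0 with hj | hj
  · simp [hj]
  · field_simp

theorem integral_sampleMean_sq (hf : Measurable f) (hC : ∀ a, |f a| ≤ C)
    (hZ : ∀ m, Measurable (Z m)) (hiid : iIndepFun Z μ) (hmean : ∀ m, ∫ ω, f (Z m ω) ∂μ = a)
    (hvar : ∀ m, Var[fun ω => f (Z m ω); μ] = v) {j : ℕ} (hj : j ≠ 0) :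
    ∫ ω, sampleMean f j (fun m => Z m ω) ^ 2 ∂μ = a ^ 2 + v / j := by
  have hLp : MemLp (fun ω => sampleMean f j (fun m => Z m ω)) 2 μ :=
    MemLp.of_bound
      ((measurable_sampleMean hf j).comp (measurable_pi_lambda _ hZ)).aestronglyMeasurable C
      (ae_of_all _ fun _ => abs_sampleMean_le hC _ _)
  have h := variance_eq_sub hLp
  rw [variance_sampleMean hf hC hZ hiid hvar, integral_sampleMean hf hC hZ hmean hj] at h
  simp only [Pi.pow_apply] at h
  linarith

end SampleMean

section RandomCount

variable {α Ω : Type*} [MeasurableSpace α] [MeasurableSpace Ω] {μ : Measure Ω}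
  [IsProbabilityMeasure μ] {f : α → ℝ} {C a v : ℝ} {Z : ℕ → Ω → α} {M : Ω → ℕ}

lemma measurable_sampleMean_count (hf : Measurable f) (hM : Measurable M)
    (hZ : ∀ m, Measurable (Z m)) :
    Measurable fun ω => sampleMean f (M ω) (fun m => Z m ω) :=
  (measurable_uncurry_sampleMean hf).comp (hM.prodMk (measurable_pi_lambda _ hZ))

lemma memLp_sampleMean_count (hf : Measurable f) (hC : ∀ a, |f a| ≤ C) (hM : Measurable M)
    (hZ : ∀ m, Measurable (Z m)) :
    MemLp (fun ω => sampleMean f (M ω) (fun m => Z m ω)) 2 μ :=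
  MemLp.of_bound (measurable_sampleMean_count hf hM hZ).aestronglyMeasurable C
    (ae_of_all _ fun _ => abs_sampleMean_le hC _ _)

theorem integral_sampleMean_count (hf : Measurable f) (hC : ∀ a, |f a| ≤ C)
    (hZ : ∀ m, Measurable (Z m)) (hM : Measurable M) (hM0 : ∀ᵐ ω ∂μ, M ω ≠ 0)
    (hMZ : IndepFun M (fun ω m => Z m ω) μ) (hmean : ∀ m, ∫ ω, f (Z m ω) ∂μ = a) :
    ∫ ω, sampleMean f (M ω) (fun m => Z m ω) ∂μ = a := by
  rw [hMZ.integral_comp_eq_integral_integral hM (measurable_pi_lambda _ hZ)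
    (measurable_uncurry_sampleMean hf) (abs_sampleMean_le hC)]
  calc _ = ∫ _ω, a ∂μ :=
        integral_congr_ae (hM0.mono fun _ h => integral_sampleMean hf hC hZ hmean h)
    _ = a := by simp

theorem variance_sampleMean_count (hf : Measurable f) (hC : ∀ a, |f a| ≤ C)
    (hZ : ∀ m, Measurable (Z m)) (hiid : iIndepFun Z μ) (hM : Measurable M)
    (hM0 : ∀ᵐ ω ∂μ, M ω ≠ 0) (hMZ : IndepFun M (fun ω m => Z m ω) μ)
    (hmean : ∀ m, ∫ ω, f (Z m ω) ∂μ = a) (hvar : ∀ m, Var[fun ω => f (Z m ω); μ] = v) :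
    Var[fun ω => sampleMean f (M ω) (fun m => Z m ω); μ] = v * ∫ ω, (M ω : ℝ)⁻¹ ∂μ := by
  have hinv : Integrable (fun ω => (M ω : ℝ)⁻¹) μ :=
    Integrable.of_bound
      ((Measurable.of_discrete (f := fun k : ℕ => (k : ℝ)⁻¹)).comp hM).aestronglyMeasurable 1
      (ae_of_all _ fun ω => by simpa using Nat.cast_inv_le_one (M ω))
  have hsq : ∫ ω, sampleMean f (M ω) (fun m => Z m ω) ^ 2 ∂μ
      = a ^ 2 + v * ∫ ω, (M ω : ℝ)⁻¹ ∂μ := by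
    rw [hMZ.integral_comp_eq_integral_integral (F := fun j s => sampleMean f j s ^ 2) hM
      (measurable_pi_lambda _ hZ) ((measurable_uncurry_sampleMean hf).pow_const 2)
      (abs_sampleMean_sq_le hC)]
    calc _ = ∫ ω, a ^ 2 + v * (M ω : ℝ)⁻¹ ∂μ :=
          integral_congr_ae (hM0.mono fun ω h => by
            rw [integral_sampleMean_sq hf hC hZ hiid hmean hvar h, div_eq_mul_inv])
      _ = a ^ 2 + v * ∫ ω, (M ω : ℝ)⁻¹ ∂μ := by
          rw [integral_add (integrable_const _) (hinv.const_mul v), integral_const_mul]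
          simp
  rw [variance_eq_sub (memLp_sampleMean_count hf hC hM hZ),
    integral_sampleMean_count hf hC hZ hM hM0 hMZ hmean]
  simp only [Pi.pow_apply, hsq]
  ring

theorem covariance_sampleMean_count_eq_zero {g : α → ℝ} {b : ℝ} {Z' : ℕ → Ω → α} {M' : Ω → ℕ}
    (hf : Measurable f) (hg : Measurable g) (hfC : ∀ a, |f a| ≤ C) (hgC : ∀ a, |g a| ≤ C)
    (hZ : ∀ m, Measurable (Z m)) (hZ' : ∀ m, Measurable (Z' m))
    (hM : Measurable M) (hM' : Measurable M') (hM0 : ∀ᵐ ω ∂μ, M ω ≠ 0)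
    (hM'0 : ∀ᵐ ω ∂μ, M' ω ≠ 0)
    (hZZ' : IndepFun (fun ω m => Z m ω) (fun ω m => Z' m ω) μ)
    (hMZ : IndepFun (fun ω => (M ω, M' ω)) (fun ω => ((fun m => Z m ω), fun m => Z' m ω)) μ)
    (hmean : ∀ m, ∫ ω, f (Z m ω) ∂μ = a) (hmean' : ∀ m, ∫ ω, g (Z' m ω) ∂μ = b) :
    cov[fun ω => sampleMean f (M ω) (fun m => Z m ω),
      fun ω => sampleMean g (M' ω) (fun m => Z' m ω); μ] = 0 := by
  have hseq := measurable_pi_lambda _ hZ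
  have hseq' := measurable_pi_lambda _ hZ'
  have hF : Measurable (Function.uncurry fun (j : ℕ × ℕ) (s : (ℕ → α) × (ℕ → α)) =>
      sampleMean f j.1 s.1 * sampleMean g j.2 s.2) :=
    measurable_from_prod_countable_right fun j =>
      ((measurable_sampleMean hf j.1).comp measurable_fst).mul
        ((measurable_sampleMean hg j.2).comp measurable_snd)
  have hprod : ∫ ω, sampleMean f (M ω) (fun m => Z m ω) * sampleMean g (M' ω) (fun m => Z' m ω)
      ∂μ = a * b := by
    rw [hMZ.integral_comp_eq_integral_integral (hM.prodMk hM') (hseq.prodMk hseq') hF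
      (C := C * C) fun j s => by
        rw [abs_mul]
        exact mul_le_mul (abs_sampleMean_le hfC _ _) (abs_sampleMean_le hgC _ _)
          (abs_nonneg _) ((abs_nonneg _).trans (abs_sampleMean_le hfC j.1 s.1))]
    calc _ = ∫ _ω, a * b ∂μ := integral_congr_ae (by
          filter_upwards [hM0, hM'0] with ω h h'
          rw [hZZ'.integral_fun_comp_mul_comp hseq.aemeasurable hseq'.aemeasurable
            (measurable_sampleMean hf _).aestronglyMeasurable
            (measurable_sampleMean hg _).aestronglyMeasurable,
            integral_sampleMean hf hfC hZ hmean h, integral_sampleMean hg hgC hZ' hmean' h'])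
      _ = a * b := by simp
  rw [covariance_eq_sub (memLp_sampleMean_count hf hfC hM hZ)
      (memLp_sampleMean_count hg hgC hM' hZ'),
    integral_sampleMean_count hf hfC hZ hM hM0 (hMZ.comp measurable_fst measurable_fst) hmean,
    integral_sampleMean_count hg hgC hZ' hM' hM'0 (hMZ.comp measurable_snd measurable_snd) hmean']
  simp only [Pi.mul_apply, hprod, sub_self]

end RandomCount

section ShiftedBinomial

lemma sum_range_choose_mul_pow_mul_one_sub_pow (B : ℕ) (p : ℝ) :
    ∑ j ∈ range (B + 1), (B.choose j : ℝ) * p ^ j * (1 - p) ^ (B - j) = 1 := by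
  have h := (add_pow p (1 - p) B).symm
  rw [add_sub_cancel, one_pow] at h
  exact (sum_congr rfl fun j _ => by ring).trans h

lemma sum_range_choose_mul_pow_mul_one_sub_pow_div_succ_le {p : ℝ} (hp0 : 0 < p) (hp1 : p ≤ 1)
    (B : ℕ) :
    ∑ j ∈ range (B + 1), (B.choose j : ℝ) * p ^ j * (1 - p) ^ (B - j) / (j + 1)
      ≤ ((B + 1) * p)⁻¹ := by
  rw [← one_div, le_div_iff₀' (by positivity)]
  -- `(B + 1) * C(B, j) = C(B + 1, j + 1) * (j + 1)` turns the sum into a tail of the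
  -- binomial expansion of `(p + (1 - p)) ^ (B + 1)`
  calc (B + 1) * p * ∑ j ∈ range (B + 1), (B.choose j : ℝ) * p ^ j * (1 - p) ^ (B - j) / (j + 1)
      = ∑ j ∈ range (B + 1),
          ((B + 1).choose (j + 1) : ℝ) * p ^ (j + 1) * (1 - p) ^ (B + 1 - (j + 1)) := by
        rw [mul_sum]
        refine sum_congr rfl fun j _ => ?_
        have h : ((B : ℝ) + 1) * B.choose j = (B + 1).choose (j + 1) * ((j : ℝ) + 1) := by
          exact_mod_cast Nat.add_one_mul_choose_eq B j
        rw [Nat.add_sub_add_right]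
        field_simp
        linear_combination p * p ^ j * (1 - p) ^ (B - j) * h
    _ ≤ ∑ j ∈ range (B + 1 + 1),
          ((B + 1).choose j : ℝ) * p ^ j * (1 - p) ^ (B + 1 - j) := by
        rw [sum_range_succ' _ (B + 1)]
        exact le_add_of_nonneg_right (by simp; positivity)
    _ = 1 := sum_range_choose_mul_pow_mul_one_sub_pow (B + 1) p

variable {Ω : Type*} [MeasurableSpace Ω] {μ : Measure Ω} [IsProbabilityMeasure μ] {M : Ω → ℕ}
  {B : ℕ} {p : ℝ}

theorem ae_mem_of_shiftedBinomial (hM : Measurable M) (hp0 : 0 ≤ p) (hp1 : p ≤ 1)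
    (hbin : ∀ j : ℕ, μ {ω | M ω = j + 1}
      = ENNReal.ofReal ((B.choose j : ℝ) * p ^ j * (1 - p) ^ (B - j))) :
    ∀ᵐ ω ∂μ, M ω ∈ (range (B + 1)).map (addRightEmbedding 1) := by
  refine (ae_iff_measure_eq (hM (Finset.measurableSet _)).nullMeasurableSet).2 ?_
  rw [measure_univ, ← Set.preimage_ofPred_eq, Set.ofPred_mem_eq,
    ← sum_measure_preimage_singleton _ fun b _ => hM (measurableSet_singleton b), sum_map]
  simp only [addRightEmbedding_apply]
  rw [← ENNReal.ofReal_one, ← sum_range_choose_mul_pow_mul_one_sub_pow B p,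
    ENNReal.ofReal_sum_of_nonneg fun j _ =>
      mul_nonneg (by positivity) (pow_nonneg (sub_nonneg.2 hp1) _)]
  exact sum_congr rfl fun j _ => hbin j

theorem ae_ne_zero_of_shiftedBinomial (hM : Measurable M) (hp0 : 0 ≤ p) (hp1 : p ≤ 1)
    (hbin : ∀ j : ℕ, μ {ω | M ω = j + 1}
      = ENNReal.ofReal ((B.choose j : ℝ) * p ^ j * (1 - p) ^ (B - j))) :
    ∀ᵐ ω ∂μ, M ω ≠ 0 :=
  (ae_mem_of_shiftedBinomial hM hp0 hp1 hbin).mono fun ω h => by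
    obtain ⟨j, -, hj⟩ := mem_map.1 h
    simp [← hj]

theorem integral_comp_of_shiftedBinomial (hM : Measurable M) (hp0 : 0 ≤ p) (hp1 : p ≤ 1)
    (hbin : ∀ j : ℕ, μ {ω | M ω = j + 1}
      = ENNReal.ofReal ((B.choose j : ℝ) * p ^ j * (1 - p) ^ (B - j))) (h : ℕ → ℝ) :
    ∫ ω, h (M ω) ∂μ
      = ∑ j ∈ range (B + 1), (B.choose j : ℝ) * p ^ j * (1 - p) ^ (B - j) * h (j + 1) := by
  rw [integral_comp_eq_sum_of_ae_mem hM (ae_mem_of_shiftedBinomial hM hp0 hp1 hbin), sum_map]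
  refine sum_congr rfl fun j _ => ?_
  rw [addRightEmbedding_apply, measureReal_def, hbin, ENNReal.toReal_ofReal
    (mul_nonneg (by positivity) (pow_nonneg (sub_nonneg.2 hp1) _))]

theorem integral_inv_le_of_shiftedBinomial (hM : Measurable M) (hp0 : 0 < p) (hp1 : p ≤ 1)
    (hbin : ∀ j : ℕ, μ {ω | M ω = j + 1}
      = ENNReal.ofReal ((B.choose j : ℝ) * p ^ j * (1 - p) ^ (B - j))) :
    ∫ ω, (M ω : ℝ)⁻¹ ∂μ ≤ ((B + 1) * p)⁻¹ := by
  rw [integral_comp_of_shiftedBinomial hM hp0.le hp1 hbin fun j => (j : ℝ)⁻¹]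
  simpa [div_eq_mul_inv] using sum_range_choose_mul_pow_mul_one_sub_pow_div_succ_le hp0 hp1 B

end ShiftedBinomial

theorem integral_comp_of_uniform {Ω α : Type*} [MeasurableSpace Ω] {μ : Measure Ω}
    [IsFiniteMeasure μ] [Fintype α] [DecidableEq α] [MeasurableSpace α] [MeasurableSingletonClass α]
    {s : Finset α} {X : Ω → α} (hX : Measurable X)
    (hunif : ∀ a, μ {ω | X ω = a} = if a ∈ s then ((#s : ℝ≥0∞))⁻¹ else 0) (g : α → ℝ) :
    ∫ ω, g (X ω) ∂μ = (#s : ℝ)⁻¹ * ∑ a ∈ s, g a := by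
  rw [integral_comp_eq_sum_of_ae_mem hX (s := univ) (ae_of_all _ fun _ => mem_univ _), mul_sum]
  simp [measureReal_def, hunif, apply_ite ENNReal.toReal, ite_mul, sum_ite_mem]

lemma card_strata (n : ℕ) (K : Finset (Fin n)) (ℓ : ℕ) :
    #(strata n K ℓ) = (n - K.card).choose ℓ := by
  rw [strata, ← powersetCard_eq_filter, card_powersetCard, card_compl, Fintype.card_fin]

instance (n : ℕ) : DiscreteMeasurableSpace (Finset (Fin n)) := ⟨fun _ => trivial⟩

section Stratum

variable {Ω : Type*} [MeasurableSpace Ω] {μ : Measure Ω} [IsProbabilityMeasure μ] {n : ℕ}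
  {ν : Finset (Fin n) → ℝ} {K W : Finset (Fin n)} {ℓ : ℕ} {X : Ω → Finset (Fin n)}

theorem integral_stratum_sample (hX : Measurable X)
    (hunif : ∀ T, μ {ω | X ω = T}
      = if T ∈ strata n K ℓ then ((#(strata n K ℓ) : ℝ≥0∞))⁻¹ else 0) :
    ∫ ω, ν (X ω ∪ W) ∂μ = stratVal n ν K W ℓ := by
  rw [integral_comp_of_uniform hX hunif fun T => ν (T ∪ W), card_strata]
  rfl

theorem variance_stratum_sample (hX : Measurable X)
    (hunif : ∀ T, μ {ω | X ω = T}
      = if T ∈ strata n K ℓ then ((#(strata n K ℓ) : ℝ≥0∞))⁻¹ else 0) :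
    Var[fun ω => ν (X ω ∪ W); μ] = stratVar n ν K W ℓ := by
  rw [variance_eq_integral (X := fun ω => ν (X ω ∪ W))
      ((Measurable.of_discrete (f := fun T => ν (T ∪ W))).comp hX).aemeasurable,
    integral_stratum_sample hX hunif,
    integral_comp_of_uniform hX hunif fun T => (ν (T ∪ W) - stratVal n ν K W ℓ) ^ 2, card_strata]
  rfl

end Stratum

lemma gam_pos {n k : ℕ} (hkn : k ≤ n) : 0 < gam n k := by
  have hkn' : (k : ℝ) ≤ n := by exact_mod_cast hkn
  unfold gam
  split_ifs with hk
  · subst hk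
    have : (1 : ℝ) ≤ n - 1 := by push_cast at hkn'; linarith
    positivity
  · have hn : 0 < (n : ℝ) ^ (k - 1) := by
      rcases Nat.eq_zero_or_pos n with rfl | hn
      · simp [Nat.le_zero.1 hkn]
      · positivity
    have : 0 < (n : ℝ) - k + 1 := by linarith
    positivity

theorem variance_stratumEstimate_le {Ω : Type*} [MeasurableSpace Ω] {μ : Measure Ω}
    [IsProbabilityMeasure μ] {n : ℕ} {ν : Finset (Fin n) → ℝ} {K W : Finset (Fin n)} {ℓ : ℕ}
    {Z : ℕ → Ω → Finset (Fin n)} {M : Ω → ℕ} {B : ℕ} {p γ : ℝ}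
    (hZ : ∀ m, Measurable (Z m)) (hiid : iIndepFun Z μ)
    (hunif : ∀ m T, μ {ω | Z m ω = T}
      = if T ∈ strata n K ℓ then ((#(strata n K ℓ) : ℝ≥0∞))⁻¹ else 0)
    (hM : Measurable M) (hMZ : IndepFun M (fun ω m => Z m ω) μ)
    (hbin : ∀ j : ℕ, μ {ω | M ω = j + 1}
      = ENNReal.ofReal ((B.choose j : ℝ) * p ^ j * (1 - p) ^ (B - j)))
    (hB : 1 ≤ B) (hγ : 0 < γ) (hpγ : 1 / γ ≤ p) (hp1 : p ≤ 1) :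
    Var[fun ω => sampleMean (fun T => ν (T ∪ W)) (M ω) (fun m => Z m ω); μ]
      ≤ γ / B * stratVar n ν K W ℓ := by
  have hp0 : 0 < p := (one_div_pos.2 hγ).trans_le hpγ
  have hB' : (0 : ℝ) < B := by exact_mod_cast hB
  obtain ⟨C, hC⟩ := Finite.exists_le fun T => |ν (T ∪ W)|
  have hσ : 0 ≤ stratVar n ν K W ℓ :=
    variance_stratum_sample (hZ 0) (hunif 0) ▸ variance_nonneg _ _
  calc Var[fun ω => sampleMean (fun T => ν (T ∪ W)) (M ω) (fun m => Z m ω); μ]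
      = stratVar n ν K W ℓ * ∫ ω, (M ω : ℝ)⁻¹ ∂μ :=
        variance_sampleMean_count Measurable.of_discrete hC hZ hiid hM
          (ae_ne_zero_of_shiftedBinomial hM hp0.le hp1 hbin) hMZ
          (fun m => integral_stratum_sample (hZ m) (hunif m))
          (fun m => variance_stratum_sample (hZ m) (hunif m))
    _ ≤ stratVar n ν K W ℓ * ((B + 1) * p)⁻¹ := by
        gcongr
        exact integral_inv_le_of_shiftedBinomial hM hp0 hp1 hbin
    _ ≤ stratVar n ν K W ℓ * (B * p)⁻¹ := by
        gcongr
        linarith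
    _ ≤ γ / B * stratVar n ν K W ℓ := by
        rw [mul_comm, mul_inv, div_eq_inv_mul]
        gcongr
        exact inv_le_of_inv_le₀ hγ (by rwa [one_div] at hpγ)

theorem IhatCII_eq_const_add_sum {Ω : Type*} {n : ℕ} {ν : Finset (Fin n) → ℝ}
    {K : Finset (Fin n)} {lam : ℕ → ℝ} {L : ℕ → Finset ℕ}
    (S : Finset (Fin n) → ℕ → ℕ → Ω → Finset (Fin n)) (M : Finset (Fin n) → ℕ → Ω → ℕ)
    (hL : ∀ w, L w ⊆ range (n - K.card + 1)) :
    ∃ c₀ : ℝ, IhatCII n ν K lam L S M = fun ω => c₀ + ∑ q ∈ K.powerset.sigma fun W => L W.card,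
      (n - K.card).choose q.2 * lam q.2 * (-1) ^ (K.card - q.1.card) *
        sampleMean (fun T => ν (T ∪ q.1)) (M q.1 q.2 ω) (fun m => S q.1 q.2 m ω) := by
  refine ⟨∑ W ∈ K.powerset, ∑ ℓ ∈ range (n - K.card + 1) \ L W.card,
    (n - K.card).choose ℓ * lam ℓ * (-1) ^ (K.card - W.card) * stratVal n ν K W ℓ,
    funext fun ω => ?_⟩
  rw [IhatCII, sum_sigma, ← sum_add_distrib]
  simp only [mul_sum]
  rw [sum_comm]
  refine sum_congr rfl fun W _ => ?_
  rw [← sum_sdiff (hL W.card)]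
  congr 1
  · refine sum_congr rfl fun ℓ hℓ => ?_
    rw [IhatStrat, if_neg (mem_sdiff.1 hℓ).2]
    ring
  · refine sum_congr rfl fun ℓ hℓ => ?_
    rw [IhatStrat, if_pos hℓ, sampleMean]
    ring

theorem cii_estimate_variance_bound_general {Ω : Type*} [MeasureSpace Ω]
    [IsProbabilityMeasure (ℙ : Measure Ω)]
    (n : ℕ) (ν : Finset (Fin n) → ℝ) (K : Finset (Fin n))
    (lam : ℕ → ℝ)
    (L : ℕ → Finset ℕ) (hL : ∀ w, L w ⊆ Finset.range (n - K.card + 1))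
    (S : Finset (Fin n) → ℕ → ℕ → Ω → Finset (Fin n))
    (M : Finset (Fin n) → ℕ → Ω → ℕ)
    (B : ℕ) (hB : 1 ≤ B) (p : Finset (Fin n) → ℕ → ℝ)
    (hSmeas : ∀ W ℓ m, Measurable (S W ℓ m)) (hMmeas : ∀ W ℓ, Measurable (M W ℓ))
    -- within each estimated stratum the samples are i.i.d. uniform on the stratum
    (hiid : ∀ W, W ⊆ K → ∀ ℓ ∈ L W.card,
      iIndepFun (m := fun _ => finsetMeasurableSpace n) (S W ℓ) ℙ)
    (hunif : ∀ W, W ⊆ K → ∀ ℓ ∈ L W.card, ∀ (m : ℕ) (T : Finset (Fin n)),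
      ℙ {ω | S W ℓ m ω = T}
        = if T ∈ strata n K ℓ then ((strata n K ℓ).card : ℝ≥0∞)⁻¹ else 0)
    -- counts: `M_{W,ℓ} = 1 + Y_{W,ℓ}` with `Y_{W,ℓ} ~ Binomial(B̃, p_{W,ℓ})`,
    -- `p_{W,ℓ} ≥ 1/γ_k`
    (hp : ∀ W, W ⊆ K → ∀ ℓ ∈ L W.card,
      1 / gam n K.card ≤ p W ℓ ∧ p W ℓ ≤ 1)
    (hbin : ∀ W, W ⊆ K → ∀ ℓ ∈ L W.card, ∀ j : ℕ,
      ℙ {ω | M W ℓ ω = j + 1}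
        = ENNReal.ofReal ((B.choose j : ℝ) * p W ℓ ^ j * (1 - p W ℓ) ^ (B - j)))
    -- the sample sequences of distinct estimated strata are mutually independent
    (hseqIndep : iIndepFun
      (m := fun _ : EstIdx n K L => (inferInstance : MeasurableSpace (ℕ → Finset (Fin n))))
      (fun p ω => fun m => S p.1.1 p.1.2 m ω) ℙ)
    -- and independent of the vector of all counts
    (hcountIndep : IndepFun
      (fun ω => fun q : EstIdx n K L => M q.1.1 q.1.2 ω)
      (fun ω => fun (q : EstIdx n K L) (m : ℕ) => S q.1.1 q.1.2 m ω) ℙ) :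
    variance (IhatCII n ν K lam L S M) ℙ
      ≤ gam n K.card / B * ∑ W ∈ K.powerset, ∑ ℓ ∈ L W.card,
          ((n - K.card).choose ℓ : ℝ) ^ 2 * lam ℓ ^ 2 * stratVar n ν K W ℓ := by
  set E := K.powerset.sigma fun W => L W.card
  set X : (Σ _ : Finset (Fin n), ℕ) → Ω → ℝ := fun q ω =>
    sampleMean (fun T => ν (T ∪ q.1)) (M q.1 q.2 ω) (fun m => S q.1 q.2 m ω)
  have hE : ∀ q ∈ E, q.1 ⊆ K ∧ q.2 ∈ L q.1.card := fun q hq => by simpa [E] using hq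
  let idx : ∀ q ∈ E, EstIdx n K L := fun q hq => ⟨(q.1, q.2), hE q hq⟩
  have hγ : 0 < gam n K.card := gam_pos (by simpa using card_le_univ K)
  obtain ⟨C, hC⟩ := Finite.exists_le fun T => |ν T|
  have hM0 : ∀ q ∈ E, ∀ᵐ ω ∂ℙ, M q.1 q.2 ω ≠ 0 := fun q hq =>
    have ⟨hW, hℓ⟩ := hE q hq
    ae_ne_zero_of_shiftedBinomial (hMmeas _ _) ((one_div_pos.2 hγ).le.trans (hp _ hW _ hℓ).1)
      (hp _ hW _ hℓ).2 (hbin _ hW _ hℓ)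
  have hcov : ∀ q ∈ E, ∀ r ∈ E, q ≠ r → cov[X q, X r; ℙ] = 0 := fun q hq r hr hqr =>
    covariance_sampleMean_count_eq_zero Measurable.of_discrete Measurable.of_discrete
      (fun _ => hC _) (fun _ => hC _) (hSmeas _ _) (hSmeas _ _) (hMmeas _ _) (hMmeas _ _)
      (hM0 q hq) (hM0 r hr) (hseqIndep.indepFun (i := idx q hq) (j := idx r hr) fun h =>
        hqr (Sigma.ext (congrArg (·.1.1) h) (heq_of_eq (congrArg (·.1.2) h))))
      (hcountIndep.comp ((measurable_pi_apply (idx q hq)).prodMk (measurable_pi_apply (idx r hr)))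
        ((measurable_pi_apply (idx q hq)).prodMk (measurable_pi_apply (idx r hr))))
      (fun m => integral_stratum_sample (hSmeas _ _ m) (hunif _ (hE q hq).1 _ (hE q hq).2 m))
      (fun m => integral_stratum_sample (hSmeas _ _ m) (hunif _ (hE r hr).1 _ (hE r hr).2 m))
  have hvar : ∀ q ∈ E, Var[X q; ℙ] ≤ gam n K.card / B * stratVar n ν K q.1 q.2 := fun q hq =>
    have ⟨hW, hℓ⟩ := hE q hq
    variance_stratumEstimate_le (hSmeas _ _) (hiid _ hW _ hℓ) (hunif _ hW _ hℓ) (hMmeas _ _)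
      (hcountIndep.comp (measurable_pi_apply (idx q hq)) (measurable_pi_apply (idx q hq)))
      (hbin _ hW _ hℓ) hB hγ (hp _ hW _ hℓ).1 (hp _ hW _ hℓ).2
  obtain ⟨c₀, hrepr⟩ := IhatCII_eq_const_add_sum (ν := ν) (lam := lam) S M hL
  rw [hrepr]
  refine (variance_const_add_sum_le c₀ _ (fun q _ => memLp_sampleMean_count Measurable.of_discrete
    (fun _ => hC _) (hMmeas _ _) (hSmeas _ _)) hcov hvar).trans_eq ?_
  simp only [mul_sum]
  rw [sum_sigma']
  refine sum_congr rfl fun q _ => ?_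
  simp only [mul_pow, ← pow_mul, pow_mul', neg_one_sq, one_pow, mul_one]
  ring

/-- **Variance bound for the CII estimate (Theorem 4.2).** -/
theorem cii_estimate_variance_bound {Ω : Type*} [MeasureSpace Ω]
    [IsProbabilityMeasure (ℙ : Measure Ω)]
    (n : ℕ) (ν : Finset (Fin n) → ℝ) (K : Finset (Fin n)) (hk : 2 ≤ K.card)
    (lam : ℕ → ℝ)
    (L : ℕ → Finset ℕ) (hL : ∀ w, L w ⊆ Finset.range (n - K.card + 1))
    (S : Finset (Fin n) → ℕ → ℕ → Ω → Finset (Fin n))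
    (M : Finset (Fin n) → ℕ → Ω → ℕ)
    (B : ℕ) (hB : 1 ≤ B) (p : Finset (Fin n) → ℕ → ℝ)
    (hSmeas : ∀ W ℓ m, Measurable (S W ℓ m)) (hMmeas : ∀ W ℓ, Measurable (M W ℓ))
    -- within each estimated stratum the samples are i.i.d. uniform on the stratum
    (hiid : ∀ W, W ⊆ K → ∀ ℓ ∈ L W.card,
      iIndepFun (m := fun _ => finsetMeasurableSpace n) (S W ℓ) ℙ)
    (hunif : ∀ W, W ⊆ K → ∀ ℓ ∈ L W.card, ∀ (m : ℕ) (T : Finset (Fin n)),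
      ℙ {ω | S W ℓ m ω = T}
        = if T ∈ strata n K ℓ then ((strata n K ℓ).card : ℝ≥0∞)⁻¹ else 0)
    -- counts: `M_{W,ℓ} = 1 + Y_{W,ℓ}` with `Y_{W,ℓ} ~ Binomial(B̃, p_{W,ℓ})`,
    -- `p_{W,ℓ} ≥ 1/γ_k`
    (hp : ∀ W, W ⊆ K → ∀ ℓ ∈ L W.card,
      1 / gam n K.card ≤ p W ℓ ∧ p W ℓ ≤ 1)
    (hbin : ∀ W, W ⊆ K → ∀ ℓ ∈ L W.card, ∀ j : ℕ,
      ℙ {ω | M W ℓ ω = j + 1}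
        = ENNReal.ofReal ((B.choose j : ℝ) * p W ℓ ^ j * (1 - p W ℓ) ^ (B - j)))
    -- the sample sequences of distinct estimated strata are mutually independent
    (hseqIndep : iIndepFun
      (m := fun _ : EstIdx n K L => (inferInstance : MeasurableSpace (ℕ → Finset (Fin n))))
      (fun p ω => fun m => S p.1.1 p.1.2 m ω) ℙ)
    -- and independent of the vector of all counts
    (hcountIndep : IndepFun
      (fun ω => fun q : EstIdx n K L => M q.1.1 q.1.2 ω)
      (fun ω => fun (q : EstIdx n K L) (m : ℕ) => S q.1.1 q.1.2 m ω) ℙ) :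
    variance (IhatCII n ν K lam L S M) ℙ
      ≤ gam n K.card / B * ∑ W ∈ K.powerset, ∑ ℓ ∈ L W.card,
          ((n - K.card).choose ℓ : ℝ) ^ 2 * lam ℓ ^ 2 * stratVar n ν K W ℓ :=
  cii_estimate_variance_bound_general n ν K lam L hL S M B hB p hSmeas hMmeas hiid hunif hp hbin
    hseqIndep hcountIndep
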